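/- arXiv:2103.09485 — 5 statements merged into one kernel-verified Lean document; each statement's English description precedes it below -/
import Mathlib

section
/- Let R be a differential ring of characteristic p > 0 (i.e., a commutative ring with unity equipped with a sequence of additive maps ∂^j satisfying ∂^0(a) = a, additivity, the Leibniz rule ∂^j(ab) = Σ_{i=0}^{j} ∂^i(a)∂^{j−i}(b), and the composition rule ∂^k(∂^j(a)) = C(k+j,j)∂^{k+j}(a)). If I ⊆ R is a ∂-ideal (an ideal with ∂^j(I) ⊆ I for all j ≥ 1), then the radical of I is also a ∂-ideal of R. -/
/-- A differential ring structure (hyperdifferential operators) on a commutative ring: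
a sequence of additive maps `D j` with `D 0 = id`, the higher Leibniz rule, and the
composition rule `D k (D j a) = C(k+j,j) • D (k+j) a`. -/
structure HyperDiff (R : Type*) [CommRing R] where
  D : ℕ → R → R
  map_add : ∀ j a b, D j (a + b) = D j a + D j b
  d_zero : ∀ a, D 0 a = a
  leibniz : ∀ j a b, D j (a * b) = ∑ i ∈ Finset.range (j + 1), D i a * D (j - i) b
  comp : ∀ k j a, D k (D j a) = (k + j).choose j • D (k + j) a

/-!
By the Leibniz rule, `a ↦ ∑_{m ≤ N} D m a • X ^ m` is multiplicative up to degree `N`, so the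
coefficients of the `p`-th power of this Taylor polynomial of `a` are the `D m (a ^ p)`. In
characteristic `p` that power is the Frobenius twist of the polynomial expanded in `X ^ p`,
which gives `D (j * p) (a ^ p) = D j a ^ p`, and by iteration
`D (j * p ^ e) (a ^ p ^ e) = D j a ^ p ^ e`. If `a ^ n ∈ I`, choose `e` with `n ≤ p ^ e`:
then `D j a ^ p ^ e = D (j * p ^ e) (a ^ p ^ e) ∈ I`.
-/

namespace HyperDiff

open Polynomial

variable {R : Type*} [CommRing R] (𝒟 : HyperDiff R)

noncomputable def taylorPoly (N : ℕ) (a : R) : R[X] :=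
  ∑ m ∈ Finset.range (N + 1), C (𝒟.D m a) * X ^ m

lemma coeff_taylorPoly {N m : ℕ} (hm : m ≤ N) (a : R) :
    (𝒟.taylorPoly N a).coeff m = 𝒟.D m a := by
  simp [taylorPoly, coeff_X_pow, hm]

lemma coeff_taylorPoly_pow {N m : ℕ} (hm : m ≤ N) (a : R) {k : ℕ} (hk : 0 < k) :
    (𝒟.taylorPoly N a ^ k).coeff m = 𝒟.D m (a ^ k) := by
  induction k, hk using Nat.le_induction generalizing m with
  | base => simpa using 𝒟.coeff_taylorPoly hm a
  | succ k _ ih =>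
    rw [pow_succ, coeff_mul, Finset.Nat.sum_antidiagonal_eq_sum_range_succ_mk, pow_succ,
      𝒟.leibniz]
    refine Finset.sum_congr rfl fun i hi => ?_
    have hi : i ≤ m := Nat.lt_succ_iff.mp (Finset.mem_range.mp hi)
    rw [ih (hi.trans hm), 𝒟.coeff_taylorPoly ((Nat.sub_le m i).trans hm)]

lemma D_frobenius (p : ℕ) [ExpChar R p] (j : ℕ) (a : R) :
    𝒟.D (j * p) (a ^ p) = 𝒟.D j a ^ p := by
  have hp : 0 < p := expChar_pos R p
  rw [← 𝒟.coeff_taylorPoly_pow le_rfl a hp, ← map_frobenius_expand p, coeff_map,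
    coeff_expand hp, if_pos (dvd_mul_left p j), Nat.mul_div_cancel j hp,
    𝒟.coeff_taylorPoly (Nat.le_mul_of_pos_right j hp), frobenius_def]

lemma D_iterateFrobenius (p : ℕ) [ExpChar R p] (j e : ℕ) (a : R) :
    𝒟.D (j * p ^ e) (a ^ p ^ e) = 𝒟.D j a ^ p ^ e := by
  induction e with
  | zero => simp
  | succ e ih =>
    rw [pow_succ, ← mul_assoc, pow_mul, 𝒟.D_frobenius p, ih, ← pow_mul]

end HyperDiff

/-- Let `R` be a differential ring of characteristic `p > 0`.
If `I ⊆ R` is a ∂-ideal (an ideal with `∂^j(I) ⊆ I` for all `j ≥ 1`),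
then the radical of `I` is also a ∂-ideal of `R`. -/
theorem radical_deltaIdeal {R : Type*} [CommRing R] (p : ℕ) [Fact p.Prime] [CharP R p]
    (𝒟 : HyperDiff R) (I : Ideal R)
    (hI : ∀ j, 1 ≤ j → ∀ a ∈ I, 𝒟.D j a ∈ I) :
    ∀ j, 1 ≤ j → ∀ a ∈ I.radical, 𝒟.D j a ∈ I.radical := by
  intro j hj a ⟨n, hn⟩
  have hp : p.Prime := Fact.out
  have hpow : a ^ p ^ n ∈ I := I.pow_mem_of_pow_mem hn (Nat.lt_pow_self hp.one_lt).le
  refine ⟨p ^ n, ?_⟩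
  rw [← 𝒟.D_iterateFrobenius p]
  exact hI _ (Nat.mul_pos hj (pow_pos hp.pos n)) _ hpow
end

section
/- Let R be a differential ring of characteristic p > 0, let I be a proper ∂-ideal of R, and let S be a multiplicative subset of R with S ∩ I = ∅. Then there exists a prime ∂-ideal p of R such that I ⊆ p and S ∩ p = ∅. -/
namespace HyperDiff

variable {R : Type*} [CommRing R] (𝒟 : HyperDiff R)

lemma d_zero_elem (j : ℕ) : 𝒟.D j 0 = 0 := by
  have := 𝒟.map_add j 0 0
  simpa using this.symm

/-- The ∂-ideal generated by a single element `a`. -/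
def dspan (a : R) : Ideal R := Ideal.span (Set.range fun i => 𝒟.D i a)

lemma mem_dspan_self (a : R) : a ∈ 𝒟.dspan a := by
  have : a ∈ Set.range fun i => 𝒟.D i a := ⟨0, 𝒟.d_zero a⟩
  exact Ideal.subset_span this

lemma dspan_closed (a : R) : ∀ x ∈ 𝒟.dspan a, ∀ n, 𝒟.D n x ∈ 𝒟.dspan a := by
  intro x hx
  refine Submodule.span_induction ?_ ?_ ?_ ?_ hx
  · rintro _ ⟨i, rfl⟩ n
    rw [𝒟.comp n i a]
    exact nsmul_mem (Ideal.subset_span (Set.mem_range.mpr ⟨n + i, rfl⟩)) _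
  · intro n; rw [𝒟.d_zero_elem]; exact zero_mem _
  · intro u v hu hv hu' hv' n
    rw [𝒟.map_add]; exact add_mem (hu' n) (hv' n)
  · intro r u hu hu' n
    rw [smul_eq_mul, 𝒟.leibniz]
    exact Ideal.sum_mem _ fun k _ =>
      Ideal.mul_mem_left _ _ (hu' (n - k))

/-- Key lemma: if `P` is a ∂-ideal and `a * b ∈ P`, then `D i a * D j b` lies in the
radical of `P`. -/
lemma key (P : Ideal R) (hP : ∀ j, ∀ x ∈ P, 𝒟.D j x ∈ P) {a b : R} (hab : a * b ∈ P) :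
    ∀ n i j, i + j = n → 𝒟.D i a * 𝒟.D j b ∈ P.radical := by
  intro n
  induction n using Nat.strong_induction_on with
  | _ n IH =>
    intro i j hij
    have hsum : (∑ k ∈ Finset.range (n + 1), 𝒟.D k a * 𝒟.D (n - k) b) ∈ P := by
      rw [← 𝒟.leibniz]; exact hP n _ hab
    set t := 𝒟.D i a * 𝒟.D j b with ht
    have hi_mem : i ∈ Finset.range (n + 1) := by
      simp [Finset.mem_range]; omega
    have hmul : (∑ k ∈ Finset.range (n + 1), t * (𝒟.D k a * 𝒟.D (n - k) b)) ∈ P.radical := by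
      rw [← Finset.mul_sum]
      exact Ideal.mul_mem_left _ _ (Ideal.le_radical hsum)
    have hsplit :
        (∑ k ∈ Finset.range (n + 1), t * (𝒟.D k a * 𝒟.D (n - k) b))
          = t * (𝒟.D i a * 𝒟.D (n - i) b)
            + ∑ k ∈ (Finset.range (n + 1)).erase i, t * (𝒟.D k a * 𝒟.D (n - k) b) := by
      exact (Finset.add_sum_erase _ _ hi_mem).symm
    have hni : n - i = j := by omega
    have hcross : ∀ k ∈ (Finset.range (n + 1)).erase i,
        t * (𝒟.D k a * 𝒟.D (n - k) b) ∈ P.radical := by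
      intro k hk
      obtain ⟨hkne, hkmem⟩ := Finset.mem_erase.1 hk
      have hkle : k ≤ n := by simpa [Finset.mem_range, Nat.lt_succ_iff] using hkmem
      rcases lt_or_gt_of_ne hkne with hlt | hgt
      · -- k < i : use D k a * D j b ∈ radical
        have h1 : 𝒟.D k a * 𝒟.D j b ∈ P.radical := IH (k + j) (by omega) k j rfl
        have : t * (𝒟.D k a * 𝒟.D (n - k) b)
            = (𝒟.D i a * 𝒟.D (n - k) b) * (𝒟.D k a * 𝒟.D j b) := by ring
        rw [this]
        exact Ideal.mul_mem_left _ _ h1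
      · -- k > i : then n - k < j, use D i a * D (n-k) b ∈ radical
        have h1 : 𝒟.D i a * 𝒟.D (n - k) b ∈ P.radical :=
          IH (i + (n - k)) (by omega) i (n - k) rfl
        have : t * (𝒟.D k a * 𝒟.D (n - k) b)
            = (𝒟.D k a * 𝒟.D j b) * (𝒟.D i a * 𝒟.D (n - k) b) := by ring
        rw [this]
        exact Ideal.mul_mem_left _ _ h1
    have htsq : t * t ∈ P.radical := by
      have : t * t = (∑ k ∈ Finset.range (n + 1), t * (𝒟.D k a * 𝒟.D (n - k) b))
          - ∑ k ∈ (Finset.range (n + 1)).erase i, t * (𝒟.D k a * 𝒟.D (n - k) b) := by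
        rw [hsplit, hni]; ring
      rw [this]
      exact sub_mem hmul (Ideal.sum_mem _ hcross)
    have : t ^ 2 ∈ P.radical := by rwa [pow_two]
    exact P.radical_isRadical ⟨2, this⟩

lemma dspan_mul_dspan_le_radical (P : Ideal R) (hP : ∀ j, ∀ x ∈ P, 𝒟.D j x ∈ P)
    {a b : R} (hab : a * b ∈ P) : 𝒟.dspan a * 𝒟.dspan b ≤ P.radical := by
  rw [dspan, dspan, Ideal.span_mul_span']
  apply Ideal.span_le.2
  rintro _ ⟨u, ⟨i, rfl⟩, v, ⟨j, rfl⟩, rfl⟩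
  exact 𝒟.key P hP hab (i + j) i j rfl

end HyperDiff

/-- Let `R` be a differential ring of characteristic `p > 0`, `I` a
proper ∂-ideal of `R`, and `S` a multiplicative subset with `S ∩ I = ∅`.  Then there is
a prime ∂-ideal `P` with `I ⊆ P` and `S ∩ P = ∅`. -/
theorem exists_prime_deltaIdeal {R : Type*} [CommRing R] (p : ℕ) [Fact p.Prime] [CharP R p]
    (𝒟 : HyperDiff R) (I : Ideal R) (hproper : I ≠ ⊤)
    (hI : ∀ j, 1 ≤ j → ∀ a ∈ I, 𝒟.D j a ∈ I)
    (S : Submonoid R) (hdisj : ∀ s ∈ S, s ∉ I) :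
    ∃ P : Ideal R, P.IsPrime ∧ (∀ j, 1 ≤ j → ∀ a ∈ P, 𝒟.D j a ∈ P) ∧
      I ≤ P ∧ ∀ s ∈ S, s ∉ P := by
  -- the collection of ∂-ideals containing I and disjoint from S
  set 𝒮 : Set (Ideal R) :=
    {J | (∀ j, ∀ x ∈ J, 𝒟.D j x ∈ J) ∧ I ≤ J ∧ ∀ s ∈ S, s ∉ J} with h𝒮
  have hI𝒮 : I ∈ 𝒮 := by
    refine ⟨fun j x hx => ?_, le_rfl, hdisj⟩
    rcases Nat.eq_zero_or_pos j with rfl | hj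
    · rwa [𝒟.d_zero]
    · exact hI j hj x hx
  -- Zorn's lemma
  obtain ⟨P, hIP, hP𝒮, hPmax⟩ :
      ∃ P, I ≤ P ∧ P ∈ 𝒮 ∧ ∀ J ∈ 𝒮, P ≤ J → J ≤ P := by
    obtain ⟨P, hIP, hmax⟩ := zorn_le_nonempty₀ 𝒮 (fun c hc hchain y hy => by
      refine ⟨sSup c, ⟨?_, ?_, ?_⟩, fun z hz => le_sSup hz⟩
      · intro j x hx
        obtain ⟨J, hJc, hxJ⟩ :=
          (Submodule.mem_sSup_of_directed ⟨y, hy⟩ hchain.directedOn).1 hx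
        exact le_sSup hJc ((hc hJc).1 j x hxJ)
      · exact le_trans (hc hy).2.1 (le_sSup hy)
      · intro s hs hsP
        obtain ⟨J, hJc, hsJ⟩ :=
          (Submodule.mem_sSup_of_directed ⟨y, hy⟩ hchain.directedOn).1 hsP
        exact (hc hJc).2.2 s hs hsJ) I hI𝒮
    exact ⟨P, hIP, hmax.1, fun J hJ hPJ => hmax.2 hJ hPJ⟩
  obtain ⟨hPd, hIleP, hPS⟩ := hP𝒮
  -- Auxiliary: enlarging P by any a ∉ P forces intersection with S
  have haux : ∀ a : R, a ∉ P → ∃ s ∈ S, s ∈ P ⊔ 𝒟.dspan a := by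
    intro a ha
    by_contra h
    push_neg at h
    have hmem : (P ⊔ 𝒟.dspan a) ∈ 𝒮 := by
      refine ⟨?_, le_trans hIleP le_sup_left, h⟩
      intro j x hx
      obtain ⟨u, hu, v, hv, rfl⟩ := Submodule.mem_sup.1 hx
      rw [𝒟.map_add]
      exact add_mem (Submodule.mem_sup_left (hPd j u hu))
        (Submodule.mem_sup_right (𝒟.dspan_closed a v hv j))
    have hle : (P ⊔ 𝒟.dspan a) ≤ P := hPmax _ hmem le_sup_left
    exact ha (hle (le_sup_right (α := Ideal R) (a := P) (𝒟.mem_dspan_self a)))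
  -- P is prime
  have hne_top : P ≠ ⊤ := by
    intro h
    exact hPS 1 S.one_mem (h ▸ Submodule.mem_top)
  refine ⟨P, ⟨hne_top, ?_⟩, fun j _ a ha => hPd j a ha, hIleP, hPS⟩
  intro a b hab
  by_contra h
  push_neg at h
  obtain ⟨ha, hb⟩ := h
  obtain ⟨s, hsS, hs⟩ := haux a ha
  obtain ⟨t, htS, ht⟩ := haux b hb
  -- s * t ∈ P.radical
  have hst : s * t ∈ P.radical := by
    obtain ⟨u, hu, x, hx, rfl⟩ := Submodule.mem_sup.1 hs
    obtain ⟨v, hv, y, hy, rfl⟩ := Submodule.mem_sup.1 ht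
    have hxy : x * y ∈ P.radical :=
      𝒟.dspan_mul_dspan_le_radical P hPd hab (Ideal.mul_mem_mul hx hy)
    have : (u + x) * (v + y) = (u * v + u * y + x * v) + x * y := by ring
    rw [this]
    refine add_mem (Ideal.le_radical ?_) hxy
    exact add_mem (add_mem (Ideal.mul_mem_right _ _ hu) (Ideal.mul_mem_right _ _ hu))
      (Ideal.mul_mem_left _ _ hv)
  obtain ⟨N, hN⟩ := hst
  exact hPS _ (S.pow_mem (S.mul_mem hsS htS) N) hN
end

section
/- Let K be a ∂-field of characteristic p > 0 and let p be a prime ∂-ideal of the ∂-polynomial ring K{y_1,…,y_m}. Then there exists a point ξ = (ξ_1,…,ξ_m) in a ∂-extension field of K such that p = { f ∈ K{y_1,…,y_m} : f(ξ) = 0 }. -/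
universe u

/-- A ∂-extension field of a ∂-field `K`: a field extension `L/K` carrying a
∂-structure compatible with that of `K`. -/
structure DiffExtension (K : Type u) [Field K] (DK : HyperDiff K) : Type (u + 1) where
  L : Type u
  [fieldL : Field L]
  [algL : Algebra K L]
  DL : HyperDiff L
  compat : ∀ j a, DL.D j (algebraMap K L a) = algebraMap K L (DK.D j a)

attribute [instance] DiffExtension.fieldL DiffExtension.algL

/-! The operators `∂^j` of a ∂-ring `R` are the coefficients of a ring homomorphism
`R →+* R⟦X⟧` with constant term the identity, and the rule `∂^k ∂^j = C(k+j, j) ∂^(k+j)` becomes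
an identity of ring homomorphisms `R →+* R⟦X⟧⟦X⟧` once `F(X) ↦ F(Y + X)` is known to be
multiplicative (Vandermonde's identity, via Hasse derivatives of truncations). Identities of ring
homomorphisms descend to quotients and extend to localizations, so a ∂-stable prime `𝔭` of
`R = K{y_1,…,y_m}` makes `Frac(R/𝔭)` a ∂-field over `K`. The image `ξ` of `(y_1,…,y_m)` there is a
generic zero of `𝔭`: evaluation at `ξ` is the map `R → Frac(R/𝔭)`, whose kernel is `𝔭`. -/

namespace PowerSeries

open Finset

variable {R : Type*} [CommRing R]

lemma choose_smul_coeff_eq_coeff_hasseDeriv_trunc (F : R⟦X⟧) {a r n : ℕ} (h : r + a < n) :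
    (r + a).choose a • coeff (r + a) F = ((trunc n F).hasseDeriv a).coeff r := by
  rw [Polynomial.hasseDeriv_coeff, coeff_trunc, if_pos h, nsmul_eq_mul]

/-- `F(X) ↦ F(Y + X)`, with `Y` the variable of the inner series ring: the `(j, k)` coefficient is
`C(k+j, j) F_{k+j}`. -/
noncomputable def substAdd : R⟦X⟧ →+* R⟦X⟧⟦X⟧ where
  toFun F := mk fun j => mk fun k => (k + j).choose j • coeff (k + j) F
  map_one' := by
    ext j k
    rcases Nat.eq_zero_or_pos j with rfl | hj
    · simp [coeff_one]
    · simp [coeff_one, hj.ne']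
  map_mul' F G := by
    ext j k
    set n := k + j + 1
    simp only [coeff_mk]
    calc (k + j).choose j • coeff (k + j) (F * G)
        = (k + j).choose j • (trunc n F * trunc n G).coeff (k + j) := by
          rw [coeff_mul_eq_coeff_trunc_mul_trunc _ _ (Nat.lt_succ_self _), ← Polynomial.coe_mul,
            Polynomial.coeff_coe]
      _ = ∑ p ∈ antidiagonal j, ∑ q ∈ antidiagonal k,
            ((trunc n F).hasseDeriv p.1).coeff q.1 * ((trunc n G).hasseDeriv p.2).coeff q.2 := by
          rw [nsmul_eq_mul, ← Polynomial.hasseDeriv_coeff, Polynomial.hasseDeriv_mul,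
            Polynomial.finsetSum_coeff]
          simp only [Polynomial.coeff_mul]
      _ = _ := by
          rw [coeff_mul, map_sum]
          refine sum_congr rfl fun p hp => ?_
          rw [coeff_mul]
          refine sum_congr rfl fun q hq => ?_
          rw [HasAntidiagonal.mem_antidiagonal] at hp hq
          simp only [coeff_mk]
          rw [choose_smul_coeff_eq_coeff_hasseDeriv_trunc F (n := n) (by omega),
            choose_smul_coeff_eq_coeff_hasseDeriv_trunc G (n := n) (by omega)]
  map_zero' := by ext; simp
  map_add' F G := by ext; simp [smul_add]

@[simp] lemma coeff_coeff_substAdd (F : R⟦X⟧) (j k : ℕ) :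
    coeff k (coeff j (substAdd F)) = (k + j).choose j • coeff (k + j) F := by
  simp [substAdd]

lemma substAdd_map {S : Type*} [CommRing S] (f : R →+* S) (F : R⟦X⟧) :
    substAdd (map f F) = map (map f) (substAdd F) := by
  ext
  simp

end PowerSeries

namespace HyperDiff

open PowerSeries

variable {R : Type*} [CommRing R]

noncomputable def ofTaylor (Φ : R →+* R⟦X⟧) (h₀ : constantCoeff.comp Φ = RingHom.id R)
    (h₁ : (map Φ).comp Φ = substAdd.comp Φ) : HyperDiff R where
  D j a := coeff j (Φ a)
  map_add j a b := by simp
  d_zero a := by simpa using RingHom.congr_fun h₀ a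
  leibniz j a b := by simp [coeff_mul, Finset.Nat.sum_antidiagonal_eq_sum_range_succ_mk]
  comp k j a := by simpa using congr(coeff k (coeff j $(RingHom.congr_fun h₁ a)))

variable (D : HyperDiff R)

lemma mk_D_mul (a b : R) :
    PowerSeries.mk (D.D · (a * b)) = PowerSeries.mk (D.D · a) * PowerSeries.mk (D.D · b) := by
  ext j
  simp [coeff_mul, Finset.Nat.sum_antidiagonal_eq_sum_range_succ_mk, D.leibniz]

lemma mk_D_one : PowerSeries.mk (D.D · 1) = 1 := by
  -- an idempotent unit is `1`
  have hunit : IsUnit (PowerSeries.mk (D.D · 1)) :=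
    isUnit_iff_constantCoeff.mpr (by simp [D.d_zero])
  exact hunit.mul_left_cancel (by rw [← mk_D_mul, mul_one, mul_one])

noncomputable def taylor : R →+* R⟦X⟧ where
  toFun a := PowerSeries.mk (D.D · a)
  map_one' := D.mk_D_one
  map_mul' := D.mk_D_mul
  map_zero' := by
    ext j
    simpa using (AddMonoidHom.mk' (D.D j) (D.map_add j)).map_zero
  map_add' a b := by
    ext j
    simp [D.map_add]

@[simp] lemma coeff_taylor (a : R) (j : ℕ) : coeff j (D.taylor a) = D.D j a :=
  coeff_mk (R := R) j (D.D · a)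

lemma map_taylor_comp_taylor : (map D.taylor).comp D.taylor = substAdd.comp D.taylor := by
  ext a j k
  simp [D.comp]

section Transfer

variable {S : Type*} [CommRing S] {f : R →+* S} {Ψ : S →+* S⟦X⟧}

lemma constantCoeff_comp_comp_of_intertwines (hΨ : Ψ.comp f = (map f).comp D.taylor) :
    (constantCoeff.comp Ψ).comp f = (RingHom.id S).comp f := by
  ext a
  simpa only [RingHom.comp_apply, RingHom.id_apply, coeff_map, coeff_taylor, D.d_zero,
    coeff_zero_eq_constantCoeff_apply]
    using congr(coeff 0 $(RingHom.congr_fun hΨ a))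

lemma map_comp_comp_of_intertwines (hΨ : Ψ.comp f = (map f).comp D.taylor) :
    ((map Ψ).comp Ψ).comp f = (substAdd.comp Ψ).comp f := by
  ext1 a
  calc map Ψ (Ψ (f a)) = map (map f) (map D.taylor (D.taylor a)) := by
        rw [← RingHom.comp_apply Ψ f, hΨ, RingHom.comp_apply, ← RingHom.comp_apply (map Ψ),
          ← map_comp, hΨ, map_comp, RingHom.comp_apply]
    _ = substAdd (Ψ (f a)) := by
        rw [← RingHom.comp_apply (map D.taylor), map_taylor_comp_taylor, RingHom.comp_apply,
          ← substAdd_map, ← RingHom.comp_apply Ψ f, hΨ, RingHom.comp_apply]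

end Transfer

noncomputable def quotient (I : Ideal R) (hI : ∀ j, ∀ a ∈ I, D.D j a ∈ I) : HyperDiff (R ⧸ I) :=
  have hΨ := Ideal.Quotient.lift_comp_mk I ((map (Ideal.Quotient.mk I)).comp D.taylor)
    fun a ha => by ext j; simpa [Ideal.Quotient.eq_zero_iff_mem] using hI j a ha
  ofTaylor _ (Ideal.Quotient.ringHom_ext (D.constantCoeff_comp_comp_of_intertwines hΨ))
    (Ideal.Quotient.ringHom_ext (D.map_comp_comp_of_intertwines hΨ))

lemma quotient_D_mk (I : Ideal R) (hI : ∀ j, ∀ a ∈ I, D.D j a ∈ I) (j : ℕ) (a : R) :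
    (D.quotient I hI).D j (Ideal.Quotient.mk I a) = Ideal.Quotient.mk I (D.D j a) := by
  simp [quotient, ofTaylor]

noncomputable def localization (M : Submonoid R) (S : Type*) [CommRing S] [Algebra R S]
    [IsLocalization M S] : HyperDiff S :=
  have hΨ := IsLocalization.lift_comp (M := M) (g := (map (algebraMap R S)).comp D.taylor)
    fun y => isUnit_iff_constantCoeff.mpr (by
      rw [← coeff_zero_eq_constantCoeff_apply]; simpa [D.d_zero] using IsLocalization.map_units S y)
  ofTaylor _ (IsLocalization.ringHom_ext M (D.constantCoeff_comp_comp_of_intertwines hΨ))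
    (IsLocalization.ringHom_ext M (D.map_comp_comp_of_intertwines hΨ))

lemma localization_D_algebraMap (M : Submonoid R) (S : Type*) [CommRing S] [Algebra R S]
    [IsLocalization M S] (j : ℕ) (a : R) :
    (D.localization M S).D j (algebraMap R S a) = algebraMap R S (D.D j a) := by
  simp [localization, ofTaylor]

end HyperDiff

open MvPolynomial in
theorem prime_deltaIdeal_has_generic_zero_general {K : Type u} [Field K] (m : ℕ) (DK : HyperDiff K)
    (DP : HyperDiff (MvPolynomial (Fin m × ℕ) K))
    (hC : ∀ j a, DP.D j (MvPolynomial.C a) = MvPolynomial.C (DK.D j a))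
    (hX : ∀ j i k, DP.D j (MvPolynomial.X ((i, k) : Fin m × ℕ)) =
      ((k + j).choose j : MvPolynomial (Fin m × ℕ) K) * MvPolynomial.X (i, k + j))
    (𝔭 : Ideal (MvPolynomial (Fin m × ℕ) K)) (h𝔭 : 𝔭.IsPrime)
    (hD𝔭 : ∀ j, ∀ f ∈ 𝔭, DP.D j f ∈ 𝔭) :
    ∃ (E : DiffExtension K DK) (ξ : Fin m → E.L), ∀ f,
      f ∈ 𝔭 ↔ MvPolynomial.eval₂ (algebraMap K E.L) (fun v => E.DL.D v.2 (ξ v.1)) f = 0 := by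
  let L := FractionRing (MvPolynomial (Fin m × ℕ) K ⧸ 𝔭)
  let DL : HyperDiff L := (DP.quotient 𝔭 hD𝔭).localization (nonZeroDivisors _) L
  let ψ : MvPolynomial (Fin m × ℕ) K →+* L := (algebraMap _ L).comp (Ideal.Quotient.mk 𝔭)
  have hDψ (j : ℕ) (f : MvPolynomial (Fin m × ℕ) K) : DL.D j (ψ f) = ψ (DP.D j f) := by
    simp [DL, ψ, HyperDiff.localization_D_algebraMap, HyperDiff.quotient_D_mk]
  have hker (f : MvPolynomial (Fin m × ℕ) K) : ψ f = 0 ↔ f ∈ 𝔭 := by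
    simp [ψ, Ideal.Quotient.eq_zero_iff_mem]
  let _ : Algebra K L := (ψ.comp C).toAlgebra
  have hξ : (fun v : Fin m × ℕ => DL.D v.2 (ψ (X (v.1, 0)))) = ψ ∘ X := by
    funext v
    simp [hDψ, hX]
  refine ⟨⟨L, DL, fun j a => (hDψ j (C a)).trans (congrArg ψ (hC j a))⟩,
    fun i => ψ (X (i, 0)), fun f => ?_⟩
  change f ∈ 𝔭 ↔ eval₂ (ψ.comp C) _ f = 0
  rw [hξ, ← eval₂_comp_left, eval₂_eta, hker]

/-- Every prime ∂-ideal `𝔭` of the ∂-polynomial ring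
`K{y_1,…,y_m}` (realized as the polynomial ring in the variables `∂^j(y_i)`)
has a generic zero: there is a ∂-extension field of `K` and a point
`ξ = (ξ_1,…,ξ_m)` in it such that `𝔭 = { f : f(ξ) = 0 }`, where evaluation
substitutes `∂^j(y_i) ↦ ∂^j(ξ_i)`. -/
theorem prime_deltaIdeal_has_generic_zero {K : Type u} [Field K] (p : ℕ) [Fact p.Prime]
    [CharP K p] (m : ℕ) (DK : HyperDiff K)
    (DP : HyperDiff (MvPolynomial (Fin m × ℕ) K))
    (hC : ∀ j a, DP.D j (MvPolynomial.C a) = MvPolynomial.C (DK.D j a))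
    (hX : ∀ j i k, DP.D j (MvPolynomial.X ((i, k) : Fin m × ℕ)) =
      ((k + j).choose j : MvPolynomial (Fin m × ℕ) K) * MvPolynomial.X (i, k + j))
    (𝔭 : Ideal (MvPolynomial (Fin m × ℕ) K)) (h𝔭 : 𝔭.IsPrime)
    (hD𝔭 : ∀ j, ∀ f ∈ 𝔭, DP.D j f ∈ 𝔭) :
    ∃ (E : DiffExtension K DK) (ξ : Fin m → E.L), ∀ f,
      f ∈ 𝔭 ↔ MvPolynomial.eval₂ (algebraMap K E.L) (fun v => E.DL.D v.2 (ξ v.1)) f = 0 :=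
  prime_deltaIdeal_has_generic_zero_general m DK DP hC hX 𝔭 h𝔭 hD𝔭
end

section
/- Let Φ ∈ GL_r over a field with a rigid analytic trivialization Ψ satisfying Ψ^(−1) = ΦΨ (where ^(−1) denotes entry-wise inverse Frobenius twist). Then for any n ≥ 0, the d-matrix d_{t,n+1}[Ψ] satisfies (d_{t,n+1}[Ψ])^(−1) = d_{t,n+1}[Φ] · d_{t,n+1}[Ψ]; that is, prolongations of rigid analytically trivial dual t-motives are rigid analytically trivial. -/
/-- The block d-matrix `d_{t,n}[M]`: indexed by `Fin n × Fin r`, with `(i,j)`-block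
`∂_t^{j−i}(M)` for `j ≥ i` and `0` below the diagonal. -/
def dMatBlock {T : Type*} [CommRing T] (Dt : ℕ → T → T) (n r : ℕ)
    (M : Matrix (Fin r) (Fin r) T) :
    Matrix (Fin n × Fin r) (Fin n × Fin r) T :=
  Matrix.of fun p q =>
    if (p.1 : ℕ) ≤ (q.1 : ℕ) then Dt ((q.1 : ℕ) - (p.1 : ℕ)) (M p.2 q.2) else 0

lemma Dt_zero' {T : Type*} [CommRing T] (Dt : ℕ → T → T)
    (hadd : ∀ j a b, Dt j (a + b) = Dt j a + Dt j b) (j : ℕ) : Dt j 0 = 0 := by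
  have h := hadd j 0 0
  rw [add_zero] at h
  exact (left_eq_add.mp h)

lemma Dt_sum' {T : Type*} [CommRing T] (Dt : ℕ → T → T)
    (hadd : ∀ j a b, Dt j (a + b) = Dt j a + Dt j b)
    {ι : Type*} (s : Finset ι) (f : ι → T) (j : ℕ) :
    Dt j (∑ i ∈ s, f i) = ∑ i ∈ s, Dt j (f i) := by
  classical
  induction s using Finset.induction_on with
  | empty => simp [Dt_zero' Dt hadd]
  | insert h ih => simp_all [hadd]

lemma key_sum {T : Type*} [CommRing T] (Dt : ℕ → T → T) (N : ℕ) (p q : Fin N)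
    (h : (p:ℕ) ≤ (q:ℕ)) (f g : ℕ → T) :
    ∑ m : Fin N, (if (p:ℕ) ≤ (m:ℕ) then f ((m:ℕ)-(p:ℕ)) else 0) *
      (if (m:ℕ) ≤ (q:ℕ) then g ((q:ℕ)-(m:ℕ)) else 0)
    = ∑ i ∈ Finset.range ((q:ℕ)-(p:ℕ)+1), f i * g ((q:ℕ)-(p:ℕ)-i) := by
  rw [Fin.sum_univ_eq_sum_range
    (fun m => (if (p:ℕ) ≤ m then f (m-(p:ℕ)) else 0) * (if m ≤ (q:ℕ) then g ((q:ℕ)-m) else 0))]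
  have hsub : Finset.Icc (p:ℕ) (q:ℕ) ⊆ Finset.range N := by
    intro m hm
    simp only [Finset.mem_Icc] at hm
    simp only [Finset.mem_range]
    exact lt_of_le_of_lt hm.2 q.isLt
  rw [← Finset.sum_subset hsub]
  · refine Finset.sum_nbij' (fun m => m - (p:ℕ)) (fun i => (p:ℕ) + i) ?_ ?_ ?_ ?_ ?_
    · intro m hm
      simp only [Finset.mem_Icc] at hm
      simp only [Finset.mem_range]
      omega
    · intro i hi
      simp only [Finset.mem_range] at hi
      simp only [Finset.mem_Icc]
      omega
    · intro m hm
      simp only [Finset.mem_Icc] at hm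
      omega
    · intro i hi
      simp only [Finset.mem_range] at hi
      omega
    · intro m hm
      simp only [Finset.mem_Icc] at hm
      rw [if_pos hm.1, if_pos hm.2]
      congr 2
      omega
  · intro m hm hnot
    simp only [Finset.mem_Icc, not_and_or, not_le] at hnot
    rcases hnot with h1 | h2
    · rw [if_neg (not_le.mpr h1), zero_mul]
    · rw [if_neg (not_le.mpr h2), mul_zero]

lemma dMatBlock_mul {T : Type*} [CommRing T] (Dt : ℕ → T → T)
    (hadd : ∀ j a b, Dt j (a + b) = Dt j a + Dt j b)
    (hleib : ∀ j a b, Dt j (a * b) = ∑ i ∈ Finset.range (j + 1), Dt i a * Dt (j - i) b)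
    (n r : ℕ) (A B : Matrix (Fin r) (Fin r) T) :
    dMatBlock Dt n r (A * B) = dMatBlock Dt n r A * dMatBlock Dt n r B := by
  ext ⟨p1, p2⟩ ⟨q1, q2⟩
  rw [Matrix.mul_apply, Fintype.sum_prod_type]
  simp only [dMatBlock, Matrix.of_apply]
  by_cases hpq : (p1:ℕ) ≤ (q1:ℕ)
  · rw [if_pos hpq, Matrix.mul_apply, Dt_sum' Dt hadd]
    calc ∑ k, Dt ((q1:ℕ)-(p1:ℕ)) (A p2 k * B k q2)
        = ∑ k, ∑ i ∈ Finset.range ((q1:ℕ)-(p1:ℕ)+1),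
            Dt i (A p2 k) * Dt ((q1:ℕ)-(p1:ℕ)-i) (B k q2) :=
          Finset.sum_congr rfl fun k _ => hleib _ _ _
      _ = ∑ k : Fin r, ∑ m : Fin n,
            (if (p1:ℕ) ≤ (m:ℕ) then Dt ((m:ℕ)-(p1:ℕ)) (A p2 k) else 0) *
            (if (m:ℕ) ≤ (q1:ℕ) then Dt ((q1:ℕ)-(m:ℕ)) (B k q2) else 0) :=
          Finset.sum_congr rfl fun k _ =>
            (key_sum Dt n p1 q1 hpq (fun i => Dt i (A p2 k)) (fun i => Dt i (B k q2))).symm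
      _ = _ := Finset.sum_comm
  · rw [if_neg hpq]
    symm
    apply Finset.sum_eq_zero
    intro m _
    apply Finset.sum_eq_zero
    intro k _
    by_cases h1 : (p1:ℕ) ≤ (m:ℕ)
    · rw [if_neg (by omega : ¬ (m:ℕ) ≤ (q1:ℕ)), mul_zero]
    · rw [if_neg h1, zero_mul]

lemma dMatBlock_map {T : Type*} [CommRing T] (Dt : ℕ → T → T) (τinv : T →+* T)
    (hcomm : ∀ j x, Dt j (τinv x) = τinv (Dt j x))
    (n r : ℕ) (M : Matrix (Fin r) (Fin r) T) :
    (dMatBlock Dt n r M).map τinv = dMatBlock Dt n r (M.map τinv) := by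
  ext p q
  simp only [dMatBlock, Matrix.map_apply, Matrix.of_apply]
  split_ifs
  · exact (hcomm _ _).symm
  · exact map_zero τinv

/-- Let `Φ ∈ GL_r` with a rigid analytic trivialization `Ψ ∈ GL_r`
satisfying `Ψ^(−1) = ΦΨ`, where `^(−1)` is the entry-wise inverse Frobenius twist
(a ring endomorphism commuting with the hyperderivatives `∂_t^j`).  Then for any
`n ≥ 0`, `(d_{t,n+1}[Ψ])^(−1) = d_{t,n+1}[Φ] · d_{t,n+1}[Ψ]`: prolongations of rigid
analytically trivial dual t-motives are rigid analytically trivial. -/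
theorem prolongation_rigid_analytic_trivial {T : Type*} [CommRing T] (r : ℕ)
    (τinv : T →+* T) (Dt : ℕ → T → T)
    (hadd : ∀ j a b, Dt j (a + b) = Dt j a + Dt j b)
    (h0 : ∀ a, Dt 0 a = a)
    (hleib : ∀ j a b, Dt j (a * b) = ∑ i ∈ Finset.range (j + 1), Dt i a * Dt (j - i) b)
    (hcomm : ∀ j x, Dt j (τinv x) = τinv (Dt j x))
    (Φ Ψ : Matrix (Fin r) (Fin r) T) (hΦ : IsUnit Φ) (hΨ : IsUnit Ψ)
    (hRAT : Ψ.map τinv = Φ * Ψ) (n : ℕ) :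
    (dMatBlock Dt (n + 1) r Ψ).map τinv =
      dMatBlock Dt (n + 1) r Φ * dMatBlock Dt (n + 1) r Ψ := by
  rw [dMatBlock_map Dt τinv hcomm, hRAT, dMatBlock_mul Dt hadd hleib]
end

section
/- Let ρ be a Drinfeld A-module with exponential Exp_ρ, let λ ∈ K, and for m ≥ 0 set χ_m := Exp_ρ(λ/θ^{m+1}), so f_λ(t) = Σ_{m≥0} χ_m t^m is the Anderson generating function. Then the Anderson generating function of the n-th prolongation P_n ρ at the point (λ)_j (λ in coordinate j, zeros elsewhere) equals the vector (0,…,0, f_λ, ∂_t^1(f_λ), …, ∂_t^{n+1−j}(f_λ))^T, with the zeros occupying the first j−1 coordinates. -/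
/-- The `c`-th hyperderivative `∂_t^c` on formal power series:
the `m`-th coefficient of `∂_t^c f` is `C(m+c, c)` times the `(m+c)`-th coefficient of `f`. -/
noncomputable def psHasseDeriv {𝕂 : Type*} [CommRing 𝕂] (c : ℕ) (f : PowerSeries 𝕂) :
    PowerSeries 𝕂 :=
  PowerSeries.mk fun m => ((m + c).choose c : 𝕂) * PowerSeries.coeff (m + c) f

/-!
The matrix `N = d(P_nρ)_t` is `θ` minus the nilpotent subdiagonal shift, and `N^{-(m+1)}` is
lower triangular with `(a, b)` entry `C(m + a - b, a - b) / θ^(m + 1 + a - b)`: multiplying this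
candidate by `N` lowers `m` by one, which entrywise is Pascal's rule. Applied to `λ e_j`, the
`i`-th coordinate is `C(m + c, c) λ / θ^(m + c + 1)` with `c = i - j`, and since `Exp_ρ` is
additive it pulls out the integer `C(m + c, c)`, leaving the `m`-th coefficient of `∂_t^c f_λ`.
-/

namespace Prolongation

variable {𝕂 : Type*} [Field 𝕂] {θ : 𝕂}

def tMatrix (θ : 𝕂) (n : ℕ) : Matrix (Fin (n + 1)) (Fin (n + 1)) 𝕂 :=
  Matrix.of fun i j => if i = j then θ else if (i : ℕ) = (j : ℕ) + 1 then -1 else 0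

lemma of_mul_tMatrix_apply {n : ℕ} (g : ℕ → ℕ → 𝕂) (hg : ∀ i : Fin (n + 1), g i (n + 1) = 0)
    (i k : Fin (n + 1)) :
    (Matrix.of (fun a b : Fin (n + 1) => g a b) * tMatrix θ n) i k = g i k * θ - g i (k + 1) := by
  have hsummand : ∀ x : Fin (n + 1), g i x * tMatrix θ n x k =
      (if x = k then g i k * θ else 0) - (if (x : ℕ) = k + 1 then g i x else 0) := by
    intro x
    simp only [tMatrix, Matrix.of_apply]
    split_ifs <;> simp_all [Fin.ext_iff]
  rw [Matrix.mul_apply]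
  simp only [Matrix.of_apply, hsummand, Finset.sum_sub_distrib, Finset.sum_ite_eq',
    Finset.mem_univ, if_true]
  congr 1
  rcases Nat.lt_or_ge (k + 1) (n + 1) with hk | hk
  · rw [Fintype.sum_eq_single ⟨k + 1, hk⟩ fun x hx => if_neg fun h => hx (Fin.ext h), if_pos rfl]
  · rw [show (k : ℕ) + 1 = n + 1 by omega, hg, Finset.sum_eq_zero fun x _ => if_neg (by omega)]

-- The entries of `tMatrix θ n ^ (-(m : ℤ) - 1)`, indexed by `ℕ` so that the column `n + 1`
-- just past the matrix, reached by the shift in `of_mul_tMatrix_apply`, is a harmless `0`.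
def invPowEntry (θ : 𝕂) (m a b : ℕ) : 𝕂 :=
  if b ≤ a then ((m + (a - b)).choose (a - b) : 𝕂) / θ ^ (m + (a - b) + 1) else 0

lemma invPowEntry_of_lt {a b : ℕ} (h : a < b) (m : ℕ) : invPowEntry θ m a b = 0 :=
  if_neg h.not_ge

lemma invPowEntry_self (m a : ℕ) : invPowEntry θ m a a = 1 / θ ^ (m + 1) := by
  simp [invPowEntry]

lemma invPowEntry_add_succ (m b d : ℕ) :
    invPowEntry θ m (b + d + 1) b = ((m + d + 1).choose (d + 1) : 𝕂) / θ ^ (m + d + 2) := by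
  rw [invPowEntry, if_pos (by omega), show b + d + 1 - b = d + 1 by omega]
  rfl

lemma invPowEntry_add_succ_succ (m b d : ℕ) :
    invPowEntry θ m (b + d + 1) (b + 1) = ((m + d).choose d : 𝕂) / θ ^ (m + d + 1) := by
  rw [invPowEntry, if_pos (by omega), show b + d + 1 - (b + 1) = d by omega]

lemma invPowEntry_zero_mul_sub (hθ : θ ≠ 0) (a b : ℕ) :
    invPowEntry θ 0 a b * θ - invPowEntry θ 0 a (b + 1) = if a = b then 1 else 0 := by
  rcases lt_trichotomy a b with h | rfl | h
  · rw [invPowEntry_of_lt h, invPowEntry_of_lt (h.trans b.lt_succ_self), if_neg h.ne]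
    ring
  · rw [invPowEntry_self, invPowEntry_of_lt a.lt_succ_self, if_pos rfl]
    field_simp
    ring
  · obtain ⟨d, rfl⟩ := Nat.exists_eq_add_of_lt h
    rw [invPowEntry_add_succ, invPowEntry_add_succ_succ, if_neg (by omega)]
    simp only [zero_add, Nat.choose_self, Nat.cast_one]
    field_simp
    ring

lemma invPowEntry_succ_mul_sub (hθ : θ ≠ 0) (m a b : ℕ) :
    invPowEntry θ (m + 1) a b * θ - invPowEntry θ (m + 1) a (b + 1) = invPowEntry θ m a b := by
  rcases lt_trichotomy a b with h | rfl | h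
  · rw [invPowEntry_of_lt h, invPowEntry_of_lt (h.trans b.lt_succ_self), invPowEntry_of_lt h]
    ring
  · rw [invPowEntry_self, invPowEntry_self, invPowEntry_of_lt a.lt_succ_self]
    field_simp
    ring
  · obtain ⟨d, rfl⟩ := Nat.exists_eq_add_of_lt h
    rw [invPowEntry_add_succ, invPowEntry_add_succ, invPowEntry_add_succ_succ,
      show m + 1 + d = m + d + 1 by ring, Nat.choose_succ_succ', Nat.cast_add]
    field_simp
    ring

def invPowMatrix (θ : 𝕂) (n m : ℕ) : Matrix (Fin (n + 1)) (Fin (n + 1)) 𝕂 :=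
  Matrix.of fun i k => invPowEntry θ m i k

lemma invPowMatrix_mul_tMatrix_pow (hθ : θ ≠ 0) (n m : ℕ) :
    invPowMatrix θ n m * tMatrix θ n ^ (m + 1) = 1 := by
  have hg : ∀ m, ∀ i : Fin (n + 1), invPowEntry θ m i (n + 1) = 0 :=
    fun m i => invPowEntry_of_lt i.isLt m
  induction m with
  | zero =>
    ext i k
    rw [pow_one, invPowMatrix, of_mul_tMatrix_apply _ (hg 0), invPowEntry_zero_mul_sub hθ,
      Matrix.one_apply]
    simp only [Fin.ext_iff]
  | succ m ih =>
    have hstep : invPowMatrix θ n (m + 1) * tMatrix θ n = invPowMatrix θ n m := by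
      ext i k
      rw [invPowMatrix, of_mul_tMatrix_apply _ (hg (m + 1)), invPowEntry_succ_mul_sub hθ]
      rfl
    rw [pow_succ', ← mul_assoc, hstep, ih]

lemma tMatrix_zpow_neg_sub_one (hθ : θ ≠ 0) (n m : ℕ) :
    tMatrix θ n ^ (-(m : ℤ) - 1) = invPowMatrix θ n m := by
  rw [show -(m : ℤ) - 1 = -((m + 1 : ℕ) : ℤ) by push_cast; ring, Matrix.zpow_neg_natCast]
  exact Matrix.inv_eq_left_inv (invPowMatrix_mul_tMatrix_pow hθ n m)

end Prolongation

/-- Let `ρ` be a Drinfeld module with exponential `Exp_ρ`, `λ ∈ K`,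
`χ_m := Exp_ρ(λ/θ^{m+1})`, and `f_λ(t) = Σ χ_m t^m` the Anderson generating function.
Then the Anderson generating function of `P_n ρ` at the point `(λ)_j` (with `λ` in
coordinate `j`, zeros elsewhere) equals
`(0,…,0, f_λ, ∂_t^1 f_λ, …, ∂_t^{n+1−j} f_λ)ᵀ`, with zeros in the first `j−1` coordinates.
Here the Anderson generating function of `P_n ρ` at `y` is
`G_y(t) = Σ_m Exp_{P_nρ}(N^{−m−1} y) t^m` with `N = d(P_nρ)_t`, and `Exp_{P_nρ}` acts
coordinate-wise as `Exp_ρ`. -/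
theorem prolongation_AGF {𝕂 : Type*} [Field 𝕂] (θ : 𝕂) (hθ : θ ≠ 0) (n : ℕ)
    (Expρ : 𝕂 → 𝕂) (hadd : ∀ x y, Expρ (x + y) = Expρ x + Expρ y)
    (ExpPn : (Fin (n + 1) → 𝕂) → Fin (n + 1) → 𝕂)
    (hcoord : ∀ z i, ExpPn z i = Expρ (z i))
    (N : Matrix (Fin (n + 1)) (Fin (n + 1)) 𝕂)
    (hN : N = Matrix.of (fun i j : Fin (n + 1) =>
      if i = j then θ else if (i : ℕ) = (j : ℕ) + 1 then -1 else 0))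
    (lam : 𝕂) (j : Fin (n + 1))
    (f : PowerSeries 𝕂) (hf : f = PowerSeries.mk fun m => Expρ (lam / θ ^ (m + 1))) :
    ∀ i : Fin (n + 1),
      (PowerSeries.mk fun m =>
        ExpPn ((N ^ (-(m : ℤ) - 1)).mulVec fun a => if a = j then lam else 0) i) =
      if (j : ℕ) ≤ (i : ℕ) then psHasseDeriv ((i : ℕ) - (j : ℕ)) f else 0 := by
  intro i
  let E : 𝕂 →+ 𝕂 := AddMonoidHom.mk' Expρ hadd
  have hvec : (fun a => if a = j then lam else 0) = Pi.single j lam :=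
    funext fun a => (Pi.single_apply j lam a).symm
  have hcoeff : ∀ m : ℕ, ExpPn ((N ^ (-(m : ℤ) - 1)).mulVec fun a => if a = j then lam else 0) i =
      E (Prolongation.invPowEntry θ m i j * lam) := fun m => by
    rw [hcoord, show N = Prolongation.tMatrix θ n from hN,
      Prolongation.tMatrix_zpow_neg_sub_one hθ, hvec, Matrix.mulVec_single]
    rfl
  ext m
  rw [PowerSeries.coeff_mk, hcoeff, Prolongation.invPowEntry]
  split_ifs with hji
  · set c := (i : ℕ) - j
    rw [psHasseDeriv, PowerSeries.coeff_mk, hf, PowerSeries.coeff_mk]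
    calc E (_ * lam) = E ((m + c).choose c • (lam / θ ^ (m + c + 1))) := by
          rw [nsmul_eq_mul]; congr 1; ring
      _ = _ := by rw [map_nsmul, nsmul_eq_mul]; rfl
  · rw [zero_mul, map_zero, map_zero]
end
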